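/- arXiv:1710.10545 — 7 statements merged into one kernel-verified Lean document; each statement's English description precedes it below -/
import Mathlib

section
/- Let f : [n] → {0,1} be a function on the line and let S(f) be the sorted (monotone nondecreasing) function on [n] with the same number of ones as f. Then the Hamming distance between f and S(f) is at most twice the distance from f to the nearest monotone function, i.e., |{x : f(x) ≠ S(f)(x)}| ≤ 2·min over monotone g of |{x : f(x) ≠ g(x)}|. -/
/-!
Let `A` be the set where `f = 1` and `S(f) = 0`, and `B` the set where `f = 0` and `S(f) = 1`.
Since `f` and `S(f)` have the same number of ones, `|A| = |B|`, and `f` differs from `S(f)`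
on exactly `2|A|` points. A monotone `g` either vanishes on all of `A`, and then disagrees with
`f` there, or is `1` at some `a ∈ A`; as `S(f)` is monotone, every point of `B` lies above `a`,
so `g = 1 ≠ f` on all of `B`. Either way `g` differs from `f` on at least `|A|` points.
-/

open Finset

section Bool

variable {α : Type*} [Fintype α]

lemma card_filter_ne_eq_add (f h : α → Bool) :
    #{x | f x ≠ h x} = #{x | f x = true ∧ h x = false} + #{x | f x = false ∧ h x = true} := by
  classical
  rw [← card_union_of_disjoint]
  · congr 1
    ext x
    simp only [mem_filter, mem_union, mem_univ, true_and]
    cases f x <;> cases h x <;> decide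
  · rw [disjoint_filter]
    simp +contextual

lemma card_filter_true_false_eq_of_card_filter_eq {f h : α → Bool}
    (hc : #{x | h x = true} = #{x | f x = true}) :
    #{x | f x = true ∧ h x = false} = #{x | f x = false ∧ h x = true} := by
  classical
  have hsdiff := card_sdiff_comm hc.symm
  rw [← filter_and_not, ← filter_and_not] at hsdiff
  simpa [and_comm] using hsdiff

lemma min_card_filter_le_card_filter_ne [LinearOrder α] {f s g : α → Bool}
    (hs : Monotone s) (hg : Monotone g) :
    min #{x | f x = true ∧ s x = false} #{x | f x = false ∧ s x = true} ≤ #{x | f x ≠ g x} := by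
  by_cases hA : ∃ a, f a = true ∧ s a = false ∧ g a = true
  · obtain ⟨a, -, hsa, hga⟩ := hA
    refine (min_le_right _ _).trans (card_le_card fun b hb => ?_)
    simp only [mem_filter, mem_univ, true_and] at hb ⊢
    have hab : a < b := hs.reflect_lt (by simp [hsa, hb.2])
    have hgb : g b = true := Bool.eq_true_of_true_le (hga ▸ hg hab.le)
    simp [hb.1, hgb]
  · refine (min_le_left _ _).trans (card_le_card fun x hx => ?_)
    simp only [mem_filter, mem_univ, true_and] at hx ⊢
    simp_all

end Bool

/-- For `f : [n] → {0,1}` and its sorted (monotone) version `Sf` with the same number of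
ones, the Hamming distance between `f` and `Sf` is at most twice the distance from `f`
to any monotone function. -/
theorem stmt_1 (n : ℕ) (f Sf : Fin n → Bool)
    (hSmono : Monotone Sf)
    (hones : (Finset.univ.filter fun x => Sf x = true).card =
      (Finset.univ.filter fun x => f x = true).card)
    (g : Fin n → Bool) (hg : Monotone g) :
    (Finset.univ.filter fun x => f x ≠ Sf x).card ≤
      2 * (Finset.univ.filter fun x => f x ≠ g x).card := by
  have hsplit := card_filter_ne_eq_add f Sf
  have hAB := card_filter_true_false_eq_of_card_filter_eq hones
  have hmin := min_card_filter_le_card_filter_ne (f := f) hSmono hg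
  omega
end

section
/- Let f : [n] → {0,1}, n a power of 2. Partition the edges of the augmented line into maximal a-paths for each a in {0,...,log₂ n − 1}: for each a there are 2^a vertex sequences p of the form x, x+2^a, x+2·2^a, ..., each maximal. Then the sum over all maximal a-paths p (over all a) of (f(end of p) − f(start of p)) equals Σ_{x ∈ [n]} f(x)·(p⁺(x) − p⁻(x)), where p⁺(x) (resp. p⁻(x)) is the number of maximal paths in the collection ending (resp. starting) at x; moreover p⁺ is monotone nondecreasing in x and p⁻ is monotone nonincreasing in x. -/
/-!
As `s` ranges over the starts `s < 2^a` of the maximal `a`-paths, the ends `s + n - 2^a`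
range over the top `2^a` points of `[n]`. So the sum is
`∑_a (∑_{x ≥ n - 2^a} f x - ∑_{x < 2^a} f x)`, and exchanging the order of summation weighs
each `f x` by the number of `a` with `x` in the top segment minus the number with `x` in the
bottom one. Both counts are cardinalities of filters whose predicates are monotone in `x`.
-/

open Finset

namespace Finset

variable {M : Type*} [AddCommMonoid M]

theorem sum_range_add_sub_eq_sum_filter_le {m n : ℕ} (h : m ≤ n) (g : ℕ → M) :
    ∑ s ∈ range m, g (s + (n - m)) = ∑ x ∈ range n with n - m ≤ x, g x := by
  have htop : {x ∈ range n | n - m ≤ x} = Ico (n - m) n := by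
    ext x
    simp only [mem_filter, mem_range, mem_Ico]
    omega
  rw [htop, sum_Ico_eq_sum_range, Nat.sub_sub_self h]
  simp only [Nat.add_comm]

theorem sum_range_eq_sum_filter_lt {m n : ℕ} (h : m ≤ n) (g : ℕ → M) :
    ∑ s ∈ range m, g s = ∑ x ∈ range n with x < m, g x := by
  congr 1
  ext x
  simp only [mem_filter, mem_range]
  omega

theorem sum_sum_filter_eq_sum_card_nsmul {α β : Type*} (A : Finset α) (S : Finset β)
    (P : α → β → Prop) [∀ a x, Decidable (P a x)] (g : β → M) :
    ∑ a ∈ A, ∑ x ∈ S with P a x, g x = ∑ x ∈ S, #{a ∈ A | P a x} • g x := by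
  simp only [← sum_const, sum_filter]
  exact sum_comm

end Finset

theorem sum_maximal_paths_eq_sum_mul_card_sub_card {R : Type*} [Ring R] (k : ℕ) (g : ℕ → R) :
    ∑ a ∈ range k, ∑ s ∈ range (2 ^ a), (g (s + (2 ^ k - 2 ^ a)) - g s) =
      ∑ x ∈ range (2 ^ k), g x *
        ((#{a ∈ range k | 2 ^ k - 2 ^ a ≤ x} : R) - (#{a ∈ range k | x < 2 ^ a} : R)) := by
  have hle : ∀ a ∈ range k, 2 ^ a ≤ 2 ^ k := fun a ha =>
    Nat.pow_le_pow_right two_pos (mem_range.mp ha).le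
  calc ∑ a ∈ range k, ∑ s ∈ range (2 ^ a), (g (s + (2 ^ k - 2 ^ a)) - g s)
      = ∑ a ∈ range k, ∑ x ∈ range (2 ^ k) with 2 ^ k - 2 ^ a ≤ x, g x -
          ∑ a ∈ range k, ∑ x ∈ range (2 ^ k) with x < 2 ^ a, g x := by
        rw [← sum_sub_distrib]
        refine sum_congr rfl fun a ha => ?_
        rw [sum_sub_distrib, sum_range_add_sub_eq_sum_filter_le (hle a ha),
          sum_range_eq_sum_filter_lt (hle a ha)]
    _ = ∑ x ∈ range (2 ^ k), (#{a ∈ range k | 2 ^ k - 2 ^ a ≤ x} • g x -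
          #{a ∈ range k | x < 2 ^ a} • g x) := by
        rw [sum_sum_filter_eq_sum_card_nsmul, sum_sum_filter_eq_sum_card_nsmul, sum_sub_distrib]
    _ = _ := by
        simp only [nsmul_eq_mul, mul_sub, Nat.cast_comm]

/-- Partition the edges of the augmented line on `[n] = {0,…,n-1}`, `n = 2^k`, into
maximal `a`-paths (for `a < k`, the `2^a` paths `s, s+2^a, s+2·2^a, …` with `s < 2^a`,
each ending at `s + n - 2^a`).  Then the sum over all maximal paths of
`f(end) − f(start)` equals `Σ_x f(x)·(p⁺(x) − p⁻(x))`, where `p⁺(x)` (resp. `p⁻(x)`)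
counts maximal paths ending (resp. starting) at `x`; moreover `p⁺` is monotone
nondecreasing and `p⁻` is monotone nonincreasing. -/
theorem stmt_4 (k n : ℕ) (hn : n = 2 ^ k) (f : ℕ → Bool) :
    (∑ a ∈ Finset.range k, ∑ s ∈ Finset.range (2 ^ a),
        ((if f (s + (n - 2 ^ a)) then (1:ℝ) else 0) - (if f s then (1:ℝ) else 0))) =
      (∑ x ∈ Finset.range n, (if f x then (1:ℝ) else 0) *
        ((((Finset.range k).filter fun a => n - 2 ^ a ≤ x).card : ℝ) -
          (((Finset.range k).filter fun a => x < 2 ^ a).card : ℝ))) ∧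
    Monotone (fun x : ℕ => ((Finset.range k).filter fun a => n - 2 ^ a ≤ x).card) ∧
    Antitone (fun x : ℕ => ((Finset.range k).filter fun a => x < 2 ^ a).card) := by
  subst hn
  refine ⟨sum_maximal_paths_eq_sum_mul_card_sub_card k fun x => if f x then 1 else 0,
    ?_, ?_⟩
  · exact fun x y hxy => card_le_card <| monotone_filter_right _ fun _ _ ha => ha.trans hxy
  · exact fun x y hxy => card_le_card <| monotone_filter_right _ fun _ _ ha => hxy.trans_lt ha
end

section
/- Let f : [n] → {0,1} and let S(f) be its sorted (monotone) rearrangement with the same number of ones. With ΔI_g defined as Σ over maximal a-paths p of (g(end of p) − g(start of p)) divided by n (sum over all a ∈ {0,...,log₂ n −1}), we have ΔI_{S(f)} ≥ ΔI_f. -/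
/-!
Write `p⁺(x)` for the number of maximal paths ending at `x` and `p⁻(x)` for the number starting
at `x`. Exchanging the order of summation gives `n · ΔI_g = Σ_x g(x) (p⁺(x) - p⁻(x))`, and the
weight `p⁺ - p⁻` is monotone in `x`. For a `0/1` function this is the sum of a monotone weight
over its ones; among all `m`-subsets of `[n]` that sum is largest on the top `m` positions,
which are exactly the ones of the sorted rearrangement.
-/

open Finset

theorem sum_le_sum_Ico_sub_card {M : Type*} [AddCommMonoid M] [PartialOrder M]
    [IsOrderedAddMonoid M] {w : ℕ → M} (hw : Monotone w) :
    ∀ {n : ℕ} {T : Finset ℕ}, T ⊆ range n → ∑ x ∈ T, w x ≤ ∑ x ∈ Ico (n - #T) n, w x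
  | 0, T, hT => by simp [subset_empty.mp (by simpa using hT)]
  | n + 1, T, hT => by
    rw [range_add_one] at hT
    by_cases hnT : n ∈ T
    · have hcard : #(T.erase n) + 1 = #T := card_erase_add_one hnT
      rw [← add_sum_erase T w hnT, show n + 1 - #T = n - #(T.erase n) by omega,
        sum_Ico_succ_top (by omega), add_comm]
      exact add_le_add_left (sum_le_sum_Ico_sub_card hw (subset_insert_iff.1 hT)) _
    · have hrest : T ⊆ range n := (subset_insert_iff_of_notMem hnT).1 hT
      have hcard : #T ≤ n := by simpa using card_le_card hrest
      refine (sum_le_sum_Ico_sub_card hw hrest).trans ?_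
      rw [sum_Ico_eq_sum_range, sum_Ico_eq_sum_range, Nat.sub_sub_self hcard,
        Nat.sub_sub_self (by omega)]
      exact sum_le_sum fun i _ => hw (by omega)

theorem filter_range_eq_Ico_of_monotoneOn {n : ℕ} {g : ℕ → Bool}
    (hg : MonotoneOn g (Set.Iio n)) :
    (range n).filter (fun x => g x = true) =
      Ico (n - #((range n).filter fun x => g x = true)) n := by
  set F := (range n).filter fun x => g x = true
  have hup : ∀ x ∈ F, ∀ y, x ≤ y → y < n → y ∈ F := by
    intro x hx y hxy hyn
    simp only [F, mem_filter, mem_range] at hx ⊢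
    have hgy := hg hx.1 hyn hxy
    rw [hx.2] at hgy
    exact ⟨hyn, top_unique hgy⟩
  have hsub : Ico (n - #F) n ⊆ F := by
    intro y hy
    rw [mem_Ico] at hy
    by_contra hyF
    have hFy : F ⊆ Ico (y + 1) n := fun x hx => by
      have hxn : x < n := mem_range.1 (mem_filter.1 hx).1
      have hyx : y < x := by
        by_contra hxy
        exact hyF (hup x hx y (by omega) hy.2)
      exact mem_Ico.2 ⟨hyx, hxn⟩
    have := card_le_card hFy
    rw [Nat.card_Ico] at this
    omega
  have hcard : #F ≤ n := by simpa using card_le_card (filter_subset _ (range n))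
  exact (eq_of_subset_of_card_le hsub (by rw [Nat.card_Ico]; omega)).symm

/-- `p⁺(x) - p⁻(x)`: the maximal `a`-path from `s < 2^a` ends at `s + (n - 2^a)`, so `x` ends an
`a`-path iff `n - 2^a ≤ x` and starts one iff `x < 2^a`. -/
def pathEndBalance (k n x : ℕ) : ℝ :=
  ∑ a ∈ range k, ((if n - 2 ^ a ≤ x then 1 else 0) - (if x < 2 ^ a then 1 else 0))

theorem pathEndBalance_monotone (k n : ℕ) : Monotone (pathEndBalance k n) := fun x y hxy =>
  sum_le_sum fun a _ => sub_le_sub (by split_ifs <;> norm_num; omega)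
    (by split_ifs <;> norm_num; omega)

theorem sum_range_eq_sum_range_ite_lt {M : Type*} [AddCommMonoid M] (g : ℕ → M) {m n : ℕ}
    (h : m ≤ n) :
    ∑ s ∈ range m, g s = ∑ x ∈ range n, if x < m then g x else 0 := by
  rw [← sum_filter]
  congr 1
  ext x
  simp only [mem_range, mem_filter]
  omega

theorem sum_range_add_sub_eq_sum_range_ite_le {M : Type*} [AddCommMonoid M] (g : ℕ → M)
    {m n : ℕ} (h : m ≤ n) :
    ∑ s ∈ range m, g (s + (n - m)) = ∑ x ∈ range n, if n - m ≤ x then g x else 0 := by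
  have hIco : (range n).filter (fun x => n - m ≤ x) = Ico (n - m) n := by
    ext x
    simp only [mem_filter, mem_range, mem_Ico]
    omega
  rw [← sum_filter, hIco, sum_Ico_eq_sum_range, Nat.sub_sub_self h]
  simp only [add_comm]

theorem sum_maximalPaths_eq_sum_mul_pathEndBalance (g : ℕ → ℝ) {k n : ℕ}
    (h : ∀ a ∈ range k, 2 ^ a ≤ n) :
    ∑ a ∈ range k, ∑ s ∈ range (2 ^ a), (g (s + (n - 2 ^ a)) - g s) =
      ∑ x ∈ range n, g x * pathEndBalance k n x := by
  simp only [pathEndBalance, mul_sum, mul_sub, mul_ite, mul_one, mul_zero]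
  rw [sum_comm]
  refine sum_congr rfl fun a ha => ?_
  rw [sum_sub_distrib, sum_sub_distrib, sum_range_add_sub_eq_sum_range_ite_le g (h a ha),
    sum_range_eq_sum_range_ite_lt g (h a ha)]

theorem sum_boole_mul_eq_sum_filter {ι R : Type*} [NonAssocSemiring R] (s : Finset ι)
    (g : ι → Bool) (w : ι → R) :
    ∑ x ∈ s, (if g x then 1 else 0) * w x = ∑ x ∈ s.filter (fun x => g x = true), w x := by
  simp [sum_filter, ite_mul]

/-- Sorting does not decrease `ΔI`.  For `g : [n] → {0,1}` (`n = 2^k`, points `0,…,n-1`)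
let `ΔI_g := (1/n)·Σ_{a<k} Σ_{s<2^a} (g(end of the maximal a-path from s) − g(s))`,
where the maximal `a`-path from `s < 2^a` ends at `s + n - 2^a`.  If `Sf` is the sorted
(monotone) rearrangement of `f` with the same number of ones, then `ΔI_{Sf} ≥ ΔI_f`. -/
theorem stmt_5 (k n : ℕ) (hn : n = 2 ^ k) (f Sf : ℕ → Bool)
    (hSmono : MonotoneOn Sf (Set.Iio n))
    (hones : ((Finset.range n).filter fun x => Sf x = true).card =
      ((Finset.range n).filter fun x => f x = true).card) :
    (∑ a ∈ Finset.range k, ∑ s ∈ Finset.range (2 ^ a),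
        ((if f (s + (n - 2 ^ a)) then (1:ℝ) else 0) - (if f s then (1:ℝ) else 0))) / n ≤
    (∑ a ∈ Finset.range k, ∑ s ∈ Finset.range (2 ^ a),
        ((if Sf (s + (n - 2 ^ a)) then (1:ℝ) else 0) - (if Sf s then (1:ℝ) else 0))) / n := by
  have hpow : ∀ a ∈ range k, 2 ^ a ≤ n := fun a ha =>
    hn ▸ Nat.pow_le_pow_right two_pos (mem_range.mp ha).le
  have hsum : ∀ g : ℕ → Bool,
      ∑ a ∈ range k, ∑ s ∈ range (2 ^ a),
        ((if g (s + (n - 2 ^ a)) then (1:ℝ) else 0) - (if g s then (1:ℝ) else 0)) =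
      ∑ x ∈ (range n).filter (fun x => g x = true), pathEndBalance k n x := fun g => by
    rw [← sum_boole_mul_eq_sum_filter]
    exact sum_maximalPaths_eq_sum_mul_pathEndBalance (fun x => if g x then 1 else 0) hpow
  have hnpos : (0:ℝ) < n := by rw [hn]; positivity
  rw [div_le_div_iff_of_pos_right hnpos, hsum f, hsum Sf, filter_range_eq_Ico_of_monotoneOn hSmono,
    hones]
  exact sum_le_sum_Ico_sub_card (pathEndBalance_monotone k n) (filter_subset _ _)
end

section
/- Let f : D → {0,1} be a function on a finite poset D that is ε-far from monotone (at least ε|D| values must be changed to make f monotone). Then any maximal matching M in the violation graph of f (the graph on D with an edge {x,y} whenever x < y, f(x)=1, f(y)=0) satisfies |M| ≥ ε|D|/2. -/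
/-!
Let `C` be the set of endpoints of the maximal matching `M`; it has at most `2|M|` elements.
By maximality every violated pair meets `C`, so `f` is monotone on the complement of `C`.
It therefore extends to a monotone `g x = sup {f z | z ∉ C, z ≤ x}` on the whole poset, and `g`
differs from `f` only inside `C`.
Since `f` is `ε`-far from monotone, `ε|D| ≤ |C| ≤ 2|M|`.
-/

open Finset

theorem MonotoneOn.exists_monotone_eqOn {α β : Type*} [Preorder α] [CompleteLattice β]
    {f : α → β} {s : Set α} (hf : MonotoneOn f s) :
    ∃ g : α → β, Monotone g ∧ Set.EqOn f g s := by
  refine ⟨fun x => ⨆ z ∈ s, ⨆ (_ : z ≤ x), f z, fun x y hxy => ?_, fun x hx => ?_⟩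
  · exact iSup₂_mono fun z _ => iSup_mono' fun hzx => ⟨hzx.trans hxy, le_rfl⟩
  · exact le_antisymm (le_iSup₂_of_le x hx (le_iSup_of_le le_rfl le_rfl))
      (iSup₂_le fun z hz => iSup_le fun hzx => hf hz hx hzx)

theorem monotoneOn_compl_of_forall_violation_mem {α : Type*} [PartialOrder α] {f : α → Bool}
    {C : Set α} (hC : ∀ x y, x < y → f x = true → f y = false → x ∈ C ∨ y ∈ C) :
    MonotoneOn f Cᶜ := by
  intro x hx y hy hxy
  rcases hxy.eq_or_lt with rfl | hlt
  · exact le_rfl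
  · refine Bool.le_iff_imp.2 fun hfx => ?_
    by_contra hfy
    exact (hC x y hlt hfx (by simpa using hfy)).elim hx hy

theorem card_image_fst_union_image_snd_le {α : Type*} [DecidableEq α] (M : Finset (α × α)) :
    #(M.image Prod.fst ∪ M.image Prod.snd) ≤ 2 * #M :=
  calc #(M.image Prod.fst ∪ M.image Prod.snd)
      ≤ #(M.image Prod.fst) + #(M.image Prod.snd) := card_union_le _ _
    _ ≤ #M + #M := add_le_add card_image_le card_image_le
    _ = 2 * #M := (two_mul _).symm

theorem stmt_6_general {D : Type*} [Fintype D] [PartialOrder D] (f : D → Bool) (ε : ℝ)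
    (hfar : ∀ g : D → Bool, Monotone g →
      ε * (Fintype.card D : ℝ) ≤ ((Finset.univ.filter fun x => f x ≠ g x).card : ℝ))
    (M : Finset (D × D))
    (hmaximal : ∀ x y : D, x < y → f x = true → f y = false →
      ∃ p ∈ M, p.1 = x ∨ p.2 = x ∨ p.1 = y ∨ p.2 = y) :
    ε * (Fintype.card D : ℝ) / 2 ≤ (M.card : ℝ) := by
  classical
  set C := M.image Prod.fst ∪ M.image Prod.snd
  have hcover : ∀ x y, x < y → f x = true → f y = false →
      x ∈ (C : Set D) ∨ y ∈ (C : Set D) := by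
    intro x y hxy hfx hfy
    have hfst : ∀ p ∈ M, p.1 ∈ C := fun p hp => mem_union_left _ (mem_image_of_mem _ hp)
    have hsnd : ∀ p ∈ M, p.2 ∈ C := fun p hp => mem_union_right _ (mem_image_of_mem _ hp)
    obtain ⟨p, hp, h | h | h | h⟩ := hmaximal x y hxy hfx hfy <;> subst h
    exacts [.inl (hfst p hp), .inl (hsnd p hp), .inr (hfst p hp), .inr (hsnd p hp)]
  obtain ⟨g, hg_mono, hg_eq⟩ :=
    (monotoneOn_compl_of_forall_violation_mem hcover).exists_monotone_eqOn
  have hdiff : (univ.filter fun x => f x ≠ g x) ⊆ C := fun x hx => by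
    by_contra hxC
    exact (mem_filter.1 hx).2 (hg_eq hxC)
  have hcard : (#(univ.filter fun x => f x ≠ g x) : ℝ) ≤ 2 * #M := by
    exact_mod_cast (card_le_card hdiff).trans (card_image_fst_union_image_snd_le M)
  linarith [hfar g hg_mono]

/-- If `f : D → {0,1}` on a finite poset is `ε`-far from monotone, then any maximal
matching `M` of violated pairs (`x < y`, `f x = 1`, `f y = 0`) has `|M| ≥ ε|D|/2`. -/
theorem stmt_6 {D : Type*} [Fintype D] [PartialOrder D] (f : D → Bool) (ε : ℝ)
    (hfar : ∀ g : D → Bool, Monotone g →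
      ε * (Fintype.card D : ℝ) ≤ ((Finset.univ.filter fun x => f x ≠ g x).card : ℝ))
    (M : Finset (D × D))
    (hviol : ∀ p ∈ M, p.1 < p.2 ∧ f p.1 = true ∧ f p.2 = false)
    (hmatch : ∀ p ∈ M, ∀ q ∈ M, p ≠ q →
      p.1 ≠ q.1 ∧ p.1 ≠ q.2 ∧ p.2 ≠ q.1 ∧ p.2 ≠ q.2)
    (hmaximal : ∀ x y : D, x < y → f x = true → f y = false →
      ∃ p ∈ M, p.1 = x ∨ p.2 = x ∨ p.1 = y ∨ p.2 = y) :
    ε * (Fintype.card D : ℝ) / 2 ≤ (M.card : ℝ) :=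
  stmt_6_general f ε hfar M hmaximal
end

section
/- Fix matchings H_1, ..., H_d where H_i is a matching on [n] pairing some elements x with x + 2^{a_i} (along dimension i of [n]^d). Consider the graph on [n]^d whose edges are all pairs (u,v) differing in exactly coordinate i with {u_i, v_i} matched in H_i, for some i. Then every connected component of this graph is (graph-isomorphic to) a hypercube: if a vertex x participates in the matchings H_i for exactly the coordinates i in a set K ⊆ [d], then the component of x is a |K|-dimensional hypercube, and all vertices in the component participate in exactly the matchings indexed by K. -/
/-- Vertex `x` participates in the dimension-`i` matching (lower endpoints `M i`,
step size `2^(a i)`): `x i` is either a lower or an upper endpoint of the matching. -/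
def Participates (d : ℕ) (a : Fin d → ℕ) (M : Fin d → Set ℕ)
    (x : Fin d → ℕ) (i : Fin d) : Prop :=
  x i ∈ M i ∨ ∃ z ∈ M i, x i = z + 2 ^ a i

/-- Adjacency on `[n]^d` induced by the matchings `H_1, …, H_d`: `u` and `v` differ in
exactly one coordinate `i`, along a matched pair of `H_i`. -/
def MatchAdj (d : ℕ) (a : Fin d → ℕ) (M : Fin d → Set ℕ) (u v : Fin d → ℕ) : Prop :=
  ∃ i : Fin d, ((u i ∈ M i ∧ v i = u i + 2 ^ a i) ∨ (v i ∈ M i ∧ u i = v i + 2 ^ a i)) ∧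
    ∀ j, j ≠ i → u j = v j

/-- Hypercube adjacency: differ in exactly one coordinate. -/
def CubeAdj {K : Type*} (u v : K → Bool) : Prop :=
  ∃ i : K, u i ≠ v i ∧ ∀ j, j ≠ i → u j = v j

/-!
Choose for every coordinate `i` in which `x` is matched the lower endpoint `lo i` of its
pair in `H_i`, and send `u : K → Bool` to the point that takes the value `lo i` or
`lo i + 2^(a i)` in coordinate `i ∈ K`, according to `u i`, and agrees with `x` elsewhere.
Because `H_i` is a matching (no lower endpoint is also an upper endpoint), the only
`H_i`-partner of either endpoint is the other one, so an edge leaving such a point flips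
exactly one bit of `u`, and every bit flip is an edge. Hence the image of this map is closed
under edges, contains `x`, and is connected, i.e. it is the component of `x`, and the map
is a graph isomorphism from the hypercube onto it.
-/

def IsMatchedPair (L : Set ℕ) (s p q : ℕ) : Prop :=
  (p ∈ L ∧ q = p + s) ∨ (q ∈ L ∧ p = q + s)

section MatchedPair

variable {L : Set ℕ} {s z : ℕ}

theorem IsMatchedPair.left_matched {p q : ℕ} (h : IsMatchedPair L s p q) :
    p ∈ L ∨ ∃ w ∈ L, p = w + s := by
  rcases h with ⟨hp, _⟩ | ⟨hq, hpq⟩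
  · exact Or.inl hp
  · exact Or.inr ⟨q, hq, hpq⟩

theorem cond_matched (hz : z ∈ L) (b : Bool) :
    cond b (z + s) z ∈ L ∨ ∃ w ∈ L, cond b (z + s) z = w + s := by
  cases b
  · exact Or.inl hz
  · exact Or.inr ⟨z, hz, rfl⟩

theorem cond_injective (hs : 0 < s) : Function.Injective fun b : Bool => cond b (z + s) z := by
  intro b c (h : cond b (z + s) z = cond c (z + s) z)
  cases b <;> cases c <;> first | rfl | (simp only [cond_true, cond_false] at h; omega)

theorem isMatchedPair_cond_iff (hL : ∀ w ∈ L, w + s ∉ L) (hz : z ∈ L) (b : Bool) (q : ℕ) :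
    IsMatchedPair L s (cond b (z + s) z) q ↔ q = cond (!b) (z + s) z := by
  cases b
  · refine ⟨?_, fun hq => Or.inl ⟨hz, hq⟩⟩
    rintro (⟨_, hq⟩ | ⟨hq, rfl⟩)
    · exact hq
    · exact absurd hz (hL q hq)
  · refine ⟨?_, fun hq => Or.inr ⟨hq ▸ hz, hq ▸ rfl⟩⟩
    rintro (⟨hzs, _⟩ | ⟨_, hq⟩)
    · exact absurd hzs (hL z hz)
    · simp only [Bool.not_true, cond_false]
      simp only [cond_true] at hq
      omega

end MatchedPair

theorem matchAdj_iff {d : ℕ} {a : Fin d → ℕ} {M : Fin d → Set ℕ} {u v : Fin d → ℕ} :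
    MatchAdj d a M u v ↔
      ∃ i, IsMatchedPair (M i) (2 ^ a i) (u i) (v i) ∧ ∀ j, j ≠ i → u j = v j :=
  Iff.rfl

section Hypercube

variable {K : Type*} [DecidableEq K]

theorem cubeAdj_iff_exists_eq_update {u v : K → Bool} :
    CubeAdj u v ↔ ∃ k, v = Function.update u k (!u k) := by
  constructor
  · rintro ⟨k, hk, hrest⟩
    refine ⟨k, funext fun j => ?_⟩
    by_cases hj : j = k
    · subst hj
      simpa using Bool.eq_not_iff.2 (Ne.symm hk)
    · rw [Function.update_of_ne hj, hrest j hj]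
  · rintro ⟨k, rfl⟩
    refine ⟨k, by simp, fun j hj => ?_⟩
    rw [Function.update_of_ne hj]

theorem reflTransGen_cubeAdj [Finite K] (u v : K → Bool) :
    Relation.ReflTransGen CubeAdj u v := by
  have : Fintype K := Fintype.ofFinite K
  suffices h : ∀ (S : Finset K) (u : K → Bool), (∀ j ∉ S, u j = v j) →
      Relation.ReflTransGen CubeAdj u v from
    h Finset.univ u fun j hj => absurd (Finset.mem_univ j) hj
  intro S
  induction S using Finset.induction_on with
  | empty => exact fun u hu => (funext fun j => hu j (Finset.notMem_empty j)) ▸ .refl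
  | insert k S hkS ih =>
    intro u hu
    let w := Function.update u k (v k)
    have hw : ∀ j ∉ S, w j = v j := by
      intro j hj
      by_cases hjk : j = k
      · subst hjk
        simp [w]
      · rw [show w j = u j from Function.update_of_ne hjk _ _]
        exact hu j (by simp [hjk, hj])
    have huw : Relation.ReflGen CubeAdj u w := by
      by_cases hk : v k = u k
      · exact (show w = u by simp [w, hk]) ▸ .refl
      · have hflip : v k = !u k := Bool.eq_not_iff.2 hk
        exact .single (cubeAdj_iff_exists_eq_update.2 ⟨k, by rw [← hflip]⟩)
    exact huw.to_reflTransGen.trans (ih w hw)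

end Hypercube

section CubeEmbed

variable {d : ℕ} {a : Fin d → ℕ} {M : Fin d → Set ℕ}

noncomputable def cubeEmbed (d : ℕ) (a : Fin d → ℕ) (M : Fin d → Set ℕ) (x lo : Fin d → ℕ)
    (u : {i : Fin d // Participates d a M x i} → Bool) : Fin d → ℕ :=
  open Classical in
  fun i => if h : Participates d a M x i then cond (u ⟨i, h⟩) (lo i + 2 ^ a i) (lo i) else x i

variable {x lo : Fin d → ℕ}

theorem cubeEmbed_of_participates {i : Fin d} (h : Participates d a M x i)
    (u : {i : Fin d // Participates d a M x i} → Bool) :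
    cubeEmbed d a M x lo u i = cond (u ⟨i, h⟩) (lo i + 2 ^ a i) (lo i) :=
  dif_pos h

theorem cubeEmbed_of_not_participates {i : Fin d} (h : ¬Participates d a M x i)
    (u : {i : Fin d // Participates d a M x i} → Bool) : cubeEmbed d a M x lo u i = x i :=
  dif_neg h

theorem exists_cubeEmbed_eq_self (x : Fin d → ℕ) :
    ∃ lo : Fin d → ℕ, (∀ i, Participates d a M x i → lo i ∈ M i) ∧
      ∃ u₀, cubeEmbed d a M x lo u₀ = x := by
  have hpair : ∀ i, ∃ z : ℕ, Participates d a M x i →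
      z ∈ M i ∧ ∃ b : Bool, x i = cond b (z + 2 ^ a i) z := by
    intro i
    by_cases h : Participates d a M x i
    · rcases h with hx | ⟨z, hz, hxz⟩
      · exact ⟨x i, fun _ => ⟨hx, false, rfl⟩⟩
      · exact ⟨z, fun _ => ⟨hz, true, hxz⟩⟩
    · exact ⟨0, fun h' => absurd h' h⟩
  choose lo hlo using hpair
  refine ⟨lo, fun i h => (hlo i h).1, fun k => ((hlo k.1 k.2).2).choose, funext fun i => ?_⟩
  by_cases h : Participates d a M x i
  · rw [cubeEmbed_of_participates h]
    exact ((hlo i h).2).choose_spec.symm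
  · exact cubeEmbed_of_not_participates h _

theorem cubeEmbed_injective : Function.Injective (cubeEmbed d a M x lo) := by
  intro u v huv
  funext k
  have hk := congrFun huv k.1
  simp only [cubeEmbed_of_participates k.2] at hk
  exact cond_injective (Nat.two_pow_pos _) hk

variable (hlo : ∀ i, Participates d a M x i → lo i ∈ M i)
include hlo

theorem participates_cubeEmbed_iff (u : {i : Fin d // Participates d a M x i} → Bool)
    (i : Fin d) : Participates d a M (cubeEmbed d a M x lo u) i ↔ Participates d a M x i := by
  by_cases h : Participates d a M x i
  · refine iff_of_true ?_ h
    simp only [Participates, cubeEmbed_of_participates h]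
    exact cond_matched (hlo i h) _
  · simp only [Participates, cubeEmbed_of_not_participates h]

variable (hmatch : ∀ i, ∀ z ∈ M i, z + 2 ^ a i ∉ M i)
include hmatch

theorem matchAdj_cubeEmbed_iff (u : {i : Fin d // Participates d a M x i} → Bool)
    (y : Fin d → ℕ) : MatchAdj d a M (cubeEmbed d a M x lo u) y ↔
      ∃ k, y = cubeEmbed d a M x lo (Function.update u k (!u k)) := by
  have hedge : ∀ k, IsMatchedPair (M k.1) (2 ^ a k.1) (cubeEmbed d a M x lo u k.1) (y k.1) ↔
      y k.1 = cubeEmbed d a M x lo (Function.update u k (!u k)) k.1 := by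
    intro k
    simp only [cubeEmbed_of_participates k.2, Function.update_self]
    exact isMatchedPair_cond_iff (hmatch k.1) (hlo k.1 k.2) _ _
  have hoff : ∀ k j, j ≠ k.1 →
      cubeEmbed d a M x lo (Function.update u k (!u k)) j = cubeEmbed d a M x lo u j := by
    intro k j hj
    by_cases h : Participates d a M x j
    · simp only [cubeEmbed_of_participates h]
      rw [Function.update_of_ne fun e => hj (congrArg Subtype.val e)]
    · simp only [cubeEmbed_of_not_participates h]
  rw [matchAdj_iff]
  constructor
  · rintro ⟨i, hi, hrest⟩
    have hPi : Participates d a M x i := by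
      by_contra h
      exact h ((participates_cubeEmbed_iff hlo u i).1 hi.left_matched)
    refine ⟨⟨i, hPi⟩, funext fun j => ?_⟩
    by_cases hj : j = i
    · subst hj
      exact (hedge ⟨j, hPi⟩).1 hi
    · rw [← hrest j hj, hoff ⟨i, hPi⟩ j hj]
  · rintro ⟨k, rfl⟩
    exact ⟨k.1, (hedge k).2 rfl, fun j hj => (hoff k j hj).symm⟩

theorem cubeAdj_iff_matchAdj_cubeEmbed (u v : {i : Fin d // Participates d a M x i} → Bool) :
    CubeAdj u v ↔ MatchAdj d a M (cubeEmbed d a M x lo u) (cubeEmbed d a M x lo v) := by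
  simp only [cubeAdj_iff_exists_eq_update, matchAdj_cubeEmbed_iff hlo hmatch,
    cubeEmbed_injective.eq_iff]

theorem reflTransGen_matchAdj_iff_mem_range {u₀} (hu₀ : cubeEmbed d a M x lo u₀ = x)
    (y : Fin d → ℕ) :
    Relation.ReflTransGen (MatchAdj d a M) x y ↔ y ∈ Set.range (cubeEmbed d a M x lo) := by
  constructor
  · intro hy
    induction hy with
    | refl => exact ⟨u₀, hu₀⟩
    | tail _ hstep ih =>
      obtain ⟨u, rfl⟩ := ih
      obtain ⟨k, rfl⟩ := (matchAdj_cubeEmbed_iff hlo hmatch u _).1 hstep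
      exact ⟨_, rfl⟩
  · rintro ⟨v, rfl⟩
    have h : Relation.ReflTransGen (MatchAdj d a M) (cubeEmbed d a M x lo u₀) _ :=
      (reflTransGen_cubeAdj u₀ v).lift _ fun u w =>
        (cubeAdj_iff_matchAdj_cubeEmbed hlo hmatch u w).1
    rwa [hu₀] at h

end CubeEmbed

theorem stmt_11_general (d : ℕ) (a : Fin d → ℕ) (M : Fin d → Set ℕ)
    (hmatch : ∀ i, ∀ z ∈ M i, z + 2 ^ a i ∉ M i)
    (x : Fin d → ℕ) :
    (∀ y, Relation.ReflTransGen (MatchAdj d a M) x y →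
      ∀ i, (Participates d a M y i ↔ Participates d a M x i)) ∧
    ∃ e : ({i : Fin d // Participates d a M x i} → Bool) ≃
        {y : Fin d → ℕ // Relation.ReflTransGen (MatchAdj d a M) x y},
      ∀ u v, CubeAdj u v ↔ MatchAdj d a M (e u).1 (e v).1 := by
  obtain ⟨lo, hlo, u₀, hu₀⟩ := exists_cubeEmbed_eq_self (a := a) (M := M) x
  have hreach := reflTransGen_matchAdj_iff_mem_range hlo hmatch hu₀
  refine ⟨fun y hy => ?_, ?_⟩
  · obtain ⟨u, rfl⟩ := (hreach y).1 hy
    exact participates_cubeEmbed_iff hlo u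
  · refine ⟨(Equiv.ofInjective _ cubeEmbed_injective).trans
      (Equiv.subtypeEquivRight fun y => (hreach y).symm),
      cubeAdj_iff_matchAdj_cubeEmbed hlo hmatch⟩

/-- Fixing for each dimension `i` a matching `H_i` on `[n]` (pairing `z ∈ M i` with
`z + 2^(a i)`), every connected component of the induced graph on `[n]^d` is a
hypercube: if `x` participates exactly in the matchings indexed by
`K = {i | Participates x i}`, then every vertex of the component of `x` participates in
exactly the same matchings, and the component is graph-isomorphic to the
`|K|`-dimensional hypercube. -/
theorem stmt_11 (n d : ℕ) (a : Fin d → ℕ) (M : Fin d → Set ℕ)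
    (hbound : ∀ i, ∀ z ∈ M i, z + 2 ^ a i < n)
    (hmatch : ∀ i, ∀ z ∈ M i, z + 2 ^ a i ∉ M i)
    (x : Fin d → ℕ) (hx : ∀ i, x i < n) :
    (∀ y, Relation.ReflTransGen (MatchAdj d a M) x y →
      ∀ i, (Participates d a M y i ↔ Participates d a M x i)) ∧
    ∃ e : ({i : Fin d // Participates d a M x i} → Bool) ≃
        {y : Fin d → ℕ // Relation.ReflTransGen (MatchAdj d a M) x y},
      ∀ u v, CubeAdj u v ↔ MatchAdj d a M (e u).1 (e v).1 :=
  stmt_11_general d a M hmatch x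
end

section
/- Let n be a power of 2. Fix i ∈ [d]. The edges of the augmented hypergrid [n]^d along dimension i (pairs differing only in coordinate i by a power of 2, i.e., y_i − x_i = 2^a for some 0 ≤ a ≤ log₂n − 1) are exactly partitioned by the 2·log₂ n − 1 matchings {H^0_{i,a} : 0 ≤ a ≤ log₂ n − 1} ∪ {H^1_{i,a} : 0 ≤ a ≤ log₂ n − 2} (H^1_{i, log₂ n −1} is empty): every such edge belongs to exactly one matching, and each H^c_{i,a} is a matching (no vertex in two of its edges). -/
/-! The side condition of `H^c_{i,a}` only reads bit `a` of the lower endpoint `x_i`, and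
adding `2^a` flips that bit. So two edges of one `H^c_{i,a}` cannot be chained (the head of
one would be the tail of the other, with the opposite bit), while a dimension-`i` edge of
length `2^a` lies in `H^c_{i,a}` exactly for `c` equal to that bit. An edge of `H^1_{i,a}`
starts at some `x_i ≥ 2^a`, so it needs `2^(a+1) < n`, which fails for `n = 2^k`, `a = k - 1`. -/

/-- A dimension-`i` edge of the augmented hypergrid `[n]^d` (coordinates `0,…,n-1`,
`n = 2^k`): the endpoints differ only in coordinate `i`, by `2^a` with `a < k`. -/
def DimEdge (n d k : ℕ) (i : Fin d) (e : (Fin d → ℕ) × (Fin d → ℕ)) : Prop :=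
  (∀ j, e.1 j < n) ∧ (∀ j, e.2 j < n) ∧
    ∃ a : ℕ, a < k ∧ e.2 i = e.1 i + 2 ^ a ∧ ∀ j, j ≠ i → e.2 j = e.1 j

/-- The matching `H^c_{i,a}` of the augmented hypergrid: dimension-`i` edges of length
`2^a` whose lower endpoint satisfies `x_i mod 2^(a+1) < 2^a` (for `c = 0`, the "even"
matching) or `x_i mod 2^(a+1) ≥ 2^a` (for `c ≠ 0`, the "odd" matching). -/
def HMatch (n d : ℕ) (i : Fin d) (c a : ℕ) (e : (Fin d → ℕ) × (Fin d → ℕ)) : Prop :=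
  (∀ j, e.1 j < n) ∧ (∀ j, e.2 j < n) ∧ e.2 i = e.1 i + 2 ^ a ∧
    (∀ j, j ≠ i → e.2 j = e.1 j) ∧
    (if c = 0 then e.1 i % 2 ^ (a + 1) < 2 ^ a else 2 ^ a ≤ e.1 i % 2 ^ (a + 1))

namespace Nat

theorem two_pow_le_mod_two_pow_succ_iff (x a : ℕ) : 2 ^ a ≤ x % 2 ^ (a + 1) ↔ x.testBit a := by
  rw [mod_pow_succ, testBit_eq_decide_div_mod_eq, decide_eq_true_iff]
  have hlow : x % 2 ^ a < 2 ^ a := mod_lt _ (Nat.two_pow_pos a)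
  rcases mod_two_eq_zero_or_one (x / 2 ^ a) with h | h <;> simp [h, hlow]

end Nat

theorem ite_mod_two_pow_iff_testBit (c a x : ℕ) :
    (if c = 0 then x % 2 ^ (a + 1) < 2 ^ a else 2 ^ a ≤ x % 2 ^ (a + 1)) ↔
      x.testBit a = decide (c ≠ 0) := by
  rw [← not_le, Nat.two_pow_le_mod_two_pow_succ_iff]
  split_ifs with hc <;> simp [hc]

section HMatch

variable {n d : ℕ} {i : Fin d} {c a : ℕ} {e e' : (Fin d → ℕ) × (Fin d → ℕ)}

theorem hMatch_iff : HMatch n d i c a e ↔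
    (∀ j, e.1 j < n) ∧ (∀ j, e.2 j < n) ∧ e.2 i = e.1 i + 2 ^ a ∧
      (∀ j, j ≠ i → e.2 j = e.1 j) ∧ (e.1 i).testBit a = decide (c ≠ 0) := by
  rw [HMatch, ite_mod_two_pow_iff_testBit]

theorem HMatch.testBit_fst (he : HMatch n d i c a e) : (e.1 i).testBit a = decide (c ≠ 0) :=
  (hMatch_iff.1 he).2.2.2.2

theorem HMatch.snd_eq (he : HMatch n d i c a e) : e.2 = e.1 + Pi.single i (2 ^ a) := by
  obtain ⟨-, -, hi, hj, -⟩ := he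
  funext j
  by_cases hji : j = i
  · subst hji; simp [hi]
  · simp [hj j hji, hji]

theorem HMatch.dimEdge {k : ℕ} (he : HMatch n d i c a e) (ha : a < k) : DimEdge n d k i e :=
  ⟨he.1, he.2.1, a, ha, he.2.2.1, he.2.2.2.1⟩

theorem HMatch.fst_ne_snd (he : HMatch n d i c a e) (he' : HMatch n d i c a e') :
    e.1 ≠ e'.2 := by
  intro h
  have hi : e.1 i = 2 ^ a + e'.1 i := by
    rw [h, he'.snd_eq]; simp [add_comm]
  have hflip := Nat.testBit_two_pow_add_eq (e'.1 i) a
  rw [← hi, he.testBit_fst, he'.testBit_fst] at hflip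
  cases decide (c ≠ 0) <;> simp at hflip

theorem HMatch.disjoint_of_ne (he : HMatch n d i c a e) (he' : HMatch n d i c a e')
    (hne : e ≠ e') : e.1 ≠ e'.1 ∧ e.1 ≠ e'.2 ∧ e.2 ≠ e'.1 ∧ e.2 ≠ e'.2 := by
  have hfst : e.1 ≠ e'.1 := fun h => hne (Prod.ext h (by rw [he.snd_eq, he'.snd_eq, h]))
  refine ⟨hfst, he.fst_ne_snd he', fun h => he'.fst_ne_snd he h.symm, fun h => hfst ?_⟩
  rw [he.snd_eq, he'.snd_eq] at h
  exact add_right_cancel h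

theorem HMatch.eq_of_hMatch {c' a' : ℕ} (he : HMatch n d i c a e) (he' : HMatch n d i c' a' e)
    (hc : c ≤ 1) (hc' : c' ≤ 1) : c = c' ∧ a = a' := by
  have hpow : 2 ^ a = 2 ^ a' := by have := he.2.2.1; have := he'.2.2.1; omega
  have ha : a = a' := Nat.pow_right_injective le_rfl hpow
  subst ha
  have hbit := he.testBit_fst.symm.trans he'.testBit_fst
  refine ⟨?_, rfl⟩
  by_cases h0 : c = 0 <;> by_cases h0' : c' = 0 <;> simp [h0, h0'] at hbit <;> omega

theorem HMatch.two_pow_succ_lt (he : HMatch n d i c a e) (hc : c ≠ 0) : 2 ^ (a + 1) < n := by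
  have hbit : (e.1 i).testBit a := by simp [he.testBit_fst, hc]
  have hlow : 2 ^ a ≤ e.1 i := Nat.ge_two_pow_of_testBit hbit
  have hhigh : e.2 i < n := he.2.1 i
  rw [he.2.2.1] at hhigh
  rw [pow_succ]
  omega

theorem exists_hMatch_of_dimEdge {k : ℕ} (he : DimEdge n d k i e) :
    ∃ c ≤ 1, ∃ a < k, HMatch n d i c a e := by
  obtain ⟨h1, h2, a, ha, hi, hj⟩ := he
  refine ⟨if (e.1 i).testBit a then 1 else 0, by split_ifs <;> simp, a, ha, ?_⟩
  exact hMatch_iff.2 ⟨h1, h2, hi, hj, by split_ifs with hb <;> simp [hb]⟩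

end HMatch

theorem stmt_12_general (n d k : ℕ) (hn : n = 2 ^ k) (i : Fin d) :
    (∀ c ≤ 1, ∀ a < k, ∀ e, HMatch n d i c a e → DimEdge n d k i e) ∧
    (∀ c ≤ 1, ∀ a < k, ∀ e e', HMatch n d i c a e → HMatch n d i c a e' → e ≠ e' →
      e.1 ≠ e'.1 ∧ e.1 ≠ e'.2 ∧ e.2 ≠ e'.1 ∧ e.2 ≠ e'.2) ∧
    (∀ e, DimEdge n d k i e →
      ∃! ca : ℕ × ℕ, ca.1 ≤ 1 ∧ ca.2 < k ∧ HMatch n d i ca.1 ca.2 e) ∧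
    (∀ e, ¬ HMatch n d i 1 (k - 1) e) := by
  refine ⟨fun c _ a ha e he => he.dimEdge ha,
    fun c _ a _ e e' he he' hne => he.disjoint_of_ne he' hne, fun e he => ?_, fun e he => ?_⟩
  · obtain ⟨c, hc, a, ha, hca⟩ := exists_hMatch_of_dimEdge he
    refine ⟨(c, a), ⟨hc, ha, hca⟩, fun ⟨c', a'⟩ ⟨hc', _, hca'⟩ => ?_⟩
    obtain ⟨rfl, rfl⟩ := hca'.eq_of_hMatch hca hc' hc
    rfl
  · have hlt := he.two_pow_succ_lt one_ne_zero
    have hle : 2 ^ k ≤ 2 ^ (k - 1 + 1) := Nat.pow_le_pow_right two_pos (by omega)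
    omega

/-- For `n = 2^k`, the dimension-`i` edges of the augmented hypergrid `[n]^d` are
exactly partitioned by the matchings `H^c_{i,a}` (`c ∈ {0,1}`, `a < k`):
(o) every `H^c_{i,a}`-edge is a dimension-`i` edge; (i) each `H^c_{i,a}` is a matching
(no vertex lies in two of its edges); (ii) every dimension-`i` edge belongs to exactly
one `H^c_{i,a}`; (iii) `H^1_{i,k-1}` is empty. -/
theorem stmt_12 (n d k : ℕ) (hk : 1 ≤ k) (hn : n = 2 ^ k) (i : Fin d) :
    (∀ c ≤ 1, ∀ a < k, ∀ e, HMatch n d i c a e → DimEdge n d k i e) ∧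
    (∀ c ≤ 1, ∀ a < k, ∀ e e', HMatch n d i c a e → HMatch n d i c a e' → e ≠ e' →
      e.1 ≠ e'.1 ∧ e.1 ≠ e'.2 ∧ e.2 ≠ e'.1 ∧ e.2 ≠ e'.2) ∧
    (∀ e, DimEdge n d k i e →
      ∃! ca : ℕ × ℕ, ca.1 ≤ 1 ∧ ca.2 < k ∧ HMatch n d i ca.1 ca.2 e) ∧
    (∀ e, ¬ HMatch n d i 1 (k - 1) e) :=
  stmt_12_general n d k hn i
end

section
/- Let f : [n]^d → {0,1} and define g : [N]^d → {0,1} by g(y) = f(φ(y)) where φ : [N] → [n] is a monotone surjection whose fibers are intervals, each of size d+i or d+i+1 (with m fibers of size d+i and n−m of size d+i+1, N = m(d+i) + (n−m)(d+i+1)), applied coordinatewise. If f is ε-far from monotone then g is ε/6-far from monotone, provided N ≤ n(d+i+1) and (d+i)^d/(d+i+1)^d ≥ 1/3. -/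
/-!
Let `h` be monotone on `[N]^d` and let `h'(x)` be the majority value of `h` on the block
`φ⁻¹(x)`.  For `x ≤ x'` the blocks of `x` and `x'` only differ in coordinates where the block
of `x'` lies entirely above that of `x`, so swapping those coordinates shows that the density
of ones of `h` on blocks is monotone; hence `h'` is monotone on `[n]^d`.  Wherever `f` and `h'`
disagree, `g` and `h` disagree on at least half of the block, i.e. on at least
`(d+i)^d / 2` points.  So `dist(g, h) ≥ ε n^d (d+i)^d / 2 ≥ ε n^d (d+i+1)^d / 6 ≥ ε N^d / 6`.
-/

open Finset

section BlockDensity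

variable {ι α : Type*} [Fintype ι] [DecidableEq ι] [Preorder α]

/-- Swapping `y` and `z` on the coordinates where the boxes differ maps
`{y ∈ ∏ B | h y} × ∏ B'` injectively into `{z ∈ ∏ B' | h z} × ∏ B`. -/
lemma card_filter_mul_card_le_of_blockwise_le {S : Set (ι → α)} {h : (ι → α) → Bool}
    (hh : MonotoneOn h S) {B B' : ι → Finset α}
    (hBS : ∀ y ∈ Fintype.piFinset B, y ∈ S) (hB'S : ∀ y ∈ Fintype.piFinset B', y ∈ S)
    (hBB' : ∀ j, B j = B' j ∨ ∀ a ∈ B j, ∀ b ∈ B' j, a ≤ b) :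
    #{y ∈ Fintype.piFinset B | h y} * #(Fintype.piFinset B') ≤
      #{y ∈ Fintype.piFinset B' | h y} * #(Fintype.piFinset B) := by
  classical
  let swap : (ι → α) × (ι → α) → (ι → α) × (ι → α) := fun p =>
    (fun j => if B j = B' j then p.1 j else p.2 j, fun j => if B j = B' j then p.2 j else p.1 j)
  have hswap : Function.Involutive swap := by
    intro p
    ext j <;> by_cases hj : B j = B' j <;> simp [swap, hj]
  rw [← card_product, ← card_product]
  refine card_le_card_of_injOn swap ?_ hswap.injective.injOn
  rintro ⟨y, z⟩ hyz
  simp only [coe_product, Set.mem_prod, mem_coe, mem_filter, Fintype.mem_piFinset] at hyz ⊢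
  obtain ⟨⟨hy, hhy⟩, hz⟩ := hyz
  have hw : ∀ j, (swap (y, z)).1 j ∈ B' j := fun j => by
    by_cases hj : B j = B' j
    · simpa [swap, hj] using hy j
    · simpa [swap, hj] using hz j
  have hyw : y ≤ (swap (y, z)).1 := fun j => by
    by_cases hj : B j = B' j
    · simp [swap, hj]
    · simpa [swap, hj] using (hBB' j).resolve_left hj _ (hy j) _ (hz j)
  have hhw := hh (hBS y (Fintype.mem_piFinset.2 hy)) (hB'S _ (Fintype.mem_piFinset.2 hw)) hyw
  refine ⟨⟨hw, Bool.le_iff_imp.1 hhw hhy⟩, fun j => ?_⟩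
  by_cases hj : B j = B' j
  · simpa [swap, hj] using hz j
  · simpa [swap, hj] using hy j

end BlockDensity

section Majority

variable {γ : Type*}

def majority (h : γ → Bool) (s : Finset γ) : Bool := decide (#s ≤ 2 * #{y ∈ s | h y})

lemma card_le_two_mul_card_filter_eq_majority (h : γ → Bool) (s : Finset γ) :
    #s ≤ 2 * #{y ∈ s | h y = majority h s} := by
  have hsplit := card_filter_add_card_filter_not (s := s) (fun y => h y = true)
  simp only [Bool.not_eq_true] at hsplit
  cases hmaj : majority h s
  · have := of_decide_eq_false hmaj
    omega
  · exact of_decide_eq_true hmaj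

lemma monotoneOn_majority {β : Type*} [Preorder β] {s : Set β} {F : β → Finset γ}
    (h : γ → Bool) (hF : ∀ x ∈ s, (F x).Nonempty)
    (hdens : ∀ x ∈ s, ∀ x' ∈ s, x ≤ x' →
      #{y ∈ F x | h y} * #(F x') ≤ #{y ∈ F x' | h y} * #(F x)) :
    MonotoneOn (fun x => majority h (F x)) s := by
  intro x hx x' hx' hxx'
  show majority h (F x) ≤ majority h (F x')
  cases hmaj : majority h (F x)
  · exact Bool.false_le _
  have hhalf := of_decide_eq_true hmaj
  have hpos := (hF x hx).card_pos
  have := hdens x hx x' hx' hxx'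
  refine le_of_eq (decide_eq_true ?_).symm
  refine Nat.le_of_mul_le_mul_right ?_ hpos
  nlinarith

end Majority

section Fibers

variable {ι : Type*} [Fintype ι] [DecidableEq ι] (φ : ℕ → ℕ) (N : ℕ)

def fiberBox (x : ι → ℕ) : Finset (ι → ℕ) :=
  Fintype.piFinset fun j => {y ∈ range N | φ y = x j}

variable {φ N}

lemma mem_fiberBox {x y : ι → ℕ} :
    y ∈ fiberBox φ N x ↔ (∀ j, y j < N) ∧ (fun j => φ (y j)) = x := by
  simp [fiberBox, forall_and, funext_iff]

lemma pow_le_card_fiberBox {n k : ℕ} (hk : ∀ a < n, k ≤ #{y ∈ range N | φ y = a})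
    {x : ι → ℕ} (hx : ∀ j, x j < n) : k ^ Fintype.card ι ≤ #(fiberBox φ N x) := by
  rw [fiberBox, Fintype.card_piFinset]
  exact pow_card_le_prod _ _ _ fun j _ => hk _ (hx j)

lemma card_filter_fiberBox_mul_le (hφ : MonotoneOn φ (Set.Iio N)) {h : (ι → ℕ) → Bool}
    (hh : MonotoneOn h {y | ∀ j, y j < N}) {x x' : ι → ℕ} (hxx' : x ≤ x') :
    #{y ∈ fiberBox φ N x | h y} * #(fiberBox φ N x') ≤
      #{y ∈ fiberBox φ N x' | h y} * #(fiberBox φ N x) := by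
  refine card_filter_mul_card_le_of_blockwise_le hh (fun y hy => (mem_fiberBox.1 hy).1)
    (fun y hy => (mem_fiberBox.1 hy).1) fun j => ?_
  rcases (hxx' j).eq_or_lt with hj | hj
  · exact .inl (by rw [hj])
  refine .inr fun a ha b hb => ?_
  simp only [mem_filter, mem_range] at ha hb
  exact (hφ.reflect_lt ha.1 hb.1 (by rw [ha.2, hb.2]; exact hj)).le

lemma card_filter_ne_majority_mul_pow_le {n k : ℕ}
    (hk : ∀ a < n, k ≤ #{y ∈ range N | φ y = a}) (f h : (ι → ℕ) → Bool) :
    #{x ∈ Fintype.piFinset (fun _ => range n) | f x ≠ majority h (fiberBox φ N x)} *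
        k ^ Fintype.card ι ≤
      2 * #{y ∈ Fintype.piFinset (fun _ => range N) | f (fun j => φ (y j)) ≠ h y} := by
  set M := {x ∈ Fintype.piFinset (fun _ : ι => range n) | f x ≠ majority h (fiberBox φ N x)}
  set G := {y ∈ Fintype.piFinset (fun _ : ι => range N) | f (fun j => φ (y j)) ≠ h y}
  have hfiber : ∀ x ∈ M, k ^ Fintype.card ι ≤ 2 * #{y ∈ G | (fun j => φ (y j)) = x} := by
    intro x hx
    simp only [M, mem_filter, Fintype.mem_piFinset, mem_range] at hx
    refine (pow_le_card_fiberBox hk hx.1).trans <|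
      (card_le_two_mul_card_filter_eq_majority h _).trans ?_
    gcongr
    intro y hy
    simp only [mem_filter, mem_fiberBox] at hy
    obtain ⟨⟨hyN, rfl⟩, hhy⟩ := hy
    simp only [G, mem_filter, Fintype.mem_piFinset, mem_range, and_true]
    exact ⟨hyN, hhy ▸ hx.2⟩
  calc #M * k ^ Fintype.card ι ≤ ∑ x ∈ M, 2 * #{y ∈ G | (fun j => φ (y j)) = x} := by
        rw [← smul_eq_mul, ← sum_const]; exact sum_le_sum hfiber
    _ ≤ 2 * #G := by
        rw [← mul_sum, sum_card_fiberwise_eq_card_filter]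
        exact Nat.mul_le_mul_left _ (card_filter_le _ _)

end Fibers

lemma div_six_mul_pow_le {ε n N a M G : ℝ} {d : ℕ} (ha : 0 ≤ a) (hN : 0 ≤ N)
    (hNle : N ≤ n * (a + 1)) (hratio : 1 / 3 ≤ (a / (a + 1)) ^ d)
    (hM : ε * n ^ d ≤ M) (hMG : M * a ^ d ≤ 2 * G) (hG : 0 ≤ G) :
    ε / 6 * N ^ d ≤ G := by
  rcases lt_or_ge ε 0 with hε | hε
  · nlinarith [pow_nonneg hN d]
  have hn : 0 ≤ n := nonneg_of_mul_nonneg_left (hN.trans hNle) (by linarith)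
  have hb : 0 < (a + 1) ^ d := by positivity
  have hab : (a + 1) ^ d ≤ 3 * a ^ d := by
    rw [div_pow, le_div_iff₀ hb] at hratio
    linarith
  have hNd : N ^ d ≤ n ^ d * (a + 1) ^ d := by
    rw [← mul_pow]; exact pow_le_pow_left₀ hN hNle d
  calc ε / 6 * N ^ d ≤ ε / 6 * (n ^ d * (3 * a ^ d)) := by gcongr; exact hNd.trans (by gcongr)
    _ = (ε * n ^ d) * a ^ d / 2 := by ring
    _ ≤ M * a ^ d / 2 := by gcongr
    _ ≤ G := by linarith

open Classical in
theorem stmt_16_general (n N d i : ℕ)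
    (φ : ℕ → ℕ)
    (hφmono : MonotoneOn φ (Set.Iio N))
    (hfib : ∀ x < n, ((Finset.range N).filter fun y => φ y = x).card = d + i ∨
      ((Finset.range N).filter fun y => φ y = x).card = d + i + 1)
    (hNle : N ≤ n * (d + i + 1))
    (hratio : (1 : ℝ) / 3 ≤ ((d + i : ℝ) / (d + i + 1)) ^ d)
    (f : (Fin d → ℕ) → Bool) (ε : ℝ)
    (hfar : ∀ h : (Fin d → ℕ) → Bool, MonotoneOn h {x | ∀ j, x j < n} →
      ε * (n : ℝ) ^ d ≤ (((Fintype.piFinset fun _ : Fin d => Finset.range n).filter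
        fun x => f x ≠ h x).card : ℝ)) :
    ∀ h : (Fin d → ℕ) → Bool, MonotoneOn h {y | ∀ j, y j < N} →
      ε / 6 * (N : ℝ) ^ d ≤ (((Fintype.piFinset fun _ : Fin d => Finset.range N).filter
        fun y => f (fun j => φ (y j)) ≠ h y).card : ℝ) := by
  intro h hh
  have hk : ∀ a < n, d + i ≤ #{y ∈ range N | φ y = a} := fun a ha => by
    rcases hfib a ha with hc | hc <;> omega
  have hpos : 0 < (d + i) ^ d := Nat.pow_pos_iff.2 (by omega)
  have hmaj : MonotoneOn (fun x => majority h (fiberBox φ N x)) {x | ∀ j, x j < n} :=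
    monotoneOn_majority h
      (fun x hx => card_pos.1 <| hpos.trans_le (by simpa using pow_le_card_fiberBox hk hx))
      (fun _ _ _ _ hxx' => card_filter_fiberBox_mul_le hφmono hh hxx')
  have hcount := card_filter_ne_majority_mul_pow_le hk f h
  rw [Fintype.card_fin] at hcount
  exact div_six_mul_pow_le (by positivity) (by positivity) (by exact_mod_cast hNle) hratio
    (hfar _ hmaj) (by exact_mod_cast hcount) (by positivity)

open Classical in
/-- Reduction to hypergrids of power-of-two side length.  Let `φ : [N] → [n]` be a
monotone surjection whose fibers are intervals of size `d+i` or `d+i+1` (`m` fibers of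
size `d+i`, `n−m` of size `d+i+1`, `N = m(d+i) + (n−m)(d+i+1)`), applied coordinatewise,
and let `g(y) = f(φ(y))`.  If `f : [n]^d → {0,1}` is `ε`-far from monotone, then `g` is
`ε/6`-far from monotone, provided `N ≤ n(d+i+1)` and `((d+i)/(d+i+1))^d ≥ 1/3`. -/
theorem stmt_16 (n N d i m : ℕ) (hd : 1 ≤ d) (hn : 1 ≤ n) (hm : m ≤ n)
    (hN : N = m * (d + i) + (n - m) * (d + i + 1))
    (φ : ℕ → ℕ)
    (hφmono : MonotoneOn φ (Set.Iio N))
    (hφmaps : ∀ y < N, φ y < n)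
    (hφsurj : ∀ x < n, ∃ y < N, φ y = x)
    (hfib : ∀ x < n, ((Finset.range N).filter fun y => φ y = x).card = d + i ∨
      ((Finset.range N).filter fun y => φ y = x).card = d + i + 1)
    (hcount : ((Finset.range n).filter fun x =>
      ((Finset.range N).filter fun y => φ y = x).card = d + i).card = m)
    (hNle : N ≤ n * (d + i + 1))
    (hratio : (1 : ℝ) / 3 ≤ ((d + i : ℝ) / (d + i + 1)) ^ d)
    (f : (Fin d → ℕ) → Bool) (ε : ℝ)
    (hfar : ∀ h : (Fin d → ℕ) → Bool, MonotoneOn h {x | ∀ j, x j < n} →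
      ε * (n : ℝ) ^ d ≤ (((Fintype.piFinset fun _ : Fin d => Finset.range n).filter
        fun x => f x ≠ h x).card : ℝ)) :
    ∀ h : (Fin d → ℕ) → Bool, MonotoneOn h {y | ∀ j, y j < N} →
      ε / 6 * (N : ℝ) ^ d ≤ (((Fintype.piFinset fun _ : Fin d => Finset.range N).filter
        fun y => f (fun j => φ (y j)) ≠ h y).card : ℝ) :=
  stmt_16_general n N d i φ hφmono hfib hNle hratio f ε hfar
end
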